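/- For every integer k ≥ 0, Σ_{j=0}^{k} a_{2j}^2 = (2k+1) a_{2k} b_{2k}, where a_{2j} := 2^{-2j} C(2j, j) and b_{2k} := 2^{-2k} Σ_{j=0}^{k} C(2k+1, j)/(2k+1-2j). -/

import Mathlib

/-- `a n = binomial(n, n/2) / 2^n` as a rational number. -/
noncomputable def a (n : ℕ) : ℚ := (n.choose (n / 2) : ℚ) / 2 ^ n

/-- `b n = 2^{-n} Σ_{j=0}^{n/2} C(n+1,j)/(n+1-2j)` as a rational number. -/
noncomputable def b (n : ℕ) : ℚ :=
  (1 / 2 ^ n) * ∑ j ∈ Finset.range (n / 2 + 1),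
    ((n + 1).choose j : ℚ) / ((n : ℚ) + 1 - 2 * j)

/-!
Both sides satisfy the same first-order recurrence in `k`. Writing `a_k = a (2k)` and
`b_k = b (2k)`, one has `2(k+1) a_{k+1} = (2k+1) a_k` and `(2k+3) b_{k+1} = 2(k+1) b_k + a_{k+1}`,
so `(2k+3) a_{k+1} b_{k+1} = (2k+1) a_k b_k + a_{k+1}^2`, which is the inductive step.
The recurrence for `b` is proved by creative telescoping: summand by summand, the sum defining
`b_{k+1}` differs from `8(k+1)` times that of `b_k` by a difference of a rational certificate.
-/

open Finset

theorem Nat.cast_choose_mul_add_one_sub {R : Type*} [CommRing R] (n j : ℕ) :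
    ((n + 1).choose j : R) * (n + 1 - j) = (n + 1) * n.choose j := by
  rcases le_or_gt j (n + 1) with h | h
  · have := congrArg (Nat.cast : ℕ → R) (Nat.choose_mul_succ_eq n j)
    push_cast [Nat.cast_sub h] at this
    linear_combination -this
  · simp [Nat.choose_eq_zero_of_lt h, Nat.choose_eq_zero_of_lt (Nat.lt_of_succ_lt h)]

noncomputable def oddTerm (n j : ℕ) : ℚ := n.choose j / ((n : ℚ) - 2 * j)

/-- The Zeilberger certificate for the recurrence `oddTerm_add_two`. -/
noncomputable def oddTermCert (n j : ℕ) : ℚ :=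
  -(j * (n + 2).choose j * (3 * n + 6 - 2 * j)) / ((n + 2 - 2 * j) * (n + 2))

theorem oddTerm_add_two {n j : ℕ} (hj : 2 * j < n) :
    (n + 2) * oddTerm (n + 2) j
      = 4 * (n + 1) * oddTerm n j + (oddTermCert n (j + 1) - oddTermCert n j) := by
  have hjn : (2 * j : ℚ) < n := by exact_mod_cast hj
  have h₁ : ((n + 1).choose j : ℚ) = (n + 1) * n.choose j / (n + 1 - j) := by
    rw [eq_div_iff (by linarith), Nat.cast_choose_mul_add_one_sub]
  have h₂ : ((n + 2).choose j : ℚ) = (n + 2) * (n + 1).choose j / (n + 2 - j) := by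
    rw [eq_div_iff (by linarith)]
    exact_mod_cast Nat.cast_choose_mul_add_one_sub (R := ℚ) (n + 1) j
  have h₃ : ((n + 2).choose (j + 1) : ℚ) = (n + 2) * (n + 1).choose j / (j + 1) := by
    rw [eq_div_iff (by positivity)]
    exact_mod_cast (Nat.add_one_mul_choose_eq (n + 1) j).symm
  have : (n : ℚ) - 2 * j ≠ 0 := by linarith
  have : (n : ℚ) + 2 - 2 * j ≠ 0 := by linarith
  have : (n : ℚ) + 1 - j ≠ 0 := by linarith
  have : (n : ℚ) + 2 - j ≠ 0 := by linarith
  have : (n : ℚ) + 2 - 2 * (j + 1) ≠ 0 := by linarith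
  simp only [oddTerm, oddTermCert]
  push_cast
  rw [h₃, h₂, h₁]
  field_simp
  ring

theorem sum_oddTerm_succ (k : ℕ) :
    (2 * k + 3 : ℚ) * ∑ j ∈ range (k + 2), oddTerm (2 * k + 3) j
      = 8 * (k + 1) * ∑ j ∈ range (k + 1), oddTerm (2 * k + 1) j
        + (2 * k + 2).choose (k + 1) := by
  have step : ∀ j ∈ range (k + 1), (2 * k + 3 : ℚ) * oddTerm (2 * k + 3) j
      = 8 * (k + 1) * oddTerm (2 * k + 1) j
        + (oddTermCert (2 * k + 1) (j + 1) - oddTermCert (2 * k + 1) j) := by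
    intro j hj
    have := oddTerm_add_two (n := 2 * k + 1) (j := j) (by rw [mem_range] at hj; omega)
    push_cast at this
    linear_combination this
  have hcert₀ : oddTermCert (2 * k + 1) 0 = 0 := by simp [oddTermCert]
  have hlast : (2 * k + 3 : ℚ) * oddTerm (2 * k + 3) (k + 1) + oddTermCert (2 * k + 1) (k + 1)
      = (2 * k + 2).choose (k + 1) := by
    have h : ((2 * k + 3).choose (k + 1) : ℚ) * (k + 2)
        = (2 * k + 3) * (2 * k + 2).choose (k + 1) := by
      have := Nat.cast_choose_mul_add_one_sub (R := ℚ) (2 * k + 2) (k + 1)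
      push_cast at this
      linear_combination this
    simp only [oddTerm, oddTermCert]
    push_cast
    rw [show (2 * k + 3 : ℚ) - 2 * (k + 1) = 1 by ring,
      show (2 * k + 1 + 2 : ℚ) - 2 * (k + 1) = 1 by ring]
    field_simp
    linear_combination h
  rw [sum_range_succ, mul_add, mul_sum, ← hlast, sum_congr rfl step, sum_add_distrib,
    sum_range_sub, hcert₀, ← mul_sum]
  ring

theorem a_two_mul (k : ℕ) : a (2 * k) = k.centralBinom / 4 ^ k := by
  rw [a, Nat.mul_div_cancel_left k two_pos, Nat.centralBinom_eq_two_mul_choose, pow_mul]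
  norm_num

theorem a_two_mul_succ (k : ℕ) : 2 * (k + 1) * a (2 * (k + 1)) = (2 * k + 1) * a (2 * k) := by
  have h := congrArg (Nat.cast : ℕ → ℚ) (Nat.succ_mul_centralBinom_succ k)
  push_cast at h
  rw [a_two_mul, a_two_mul, pow_succ]
  field_simp
  linear_combination 2 * h

theorem b_two_mul (k : ℕ) :
    b (2 * k) = (∑ j ∈ range (k + 1), oddTerm (2 * k + 1) j) / 4 ^ k := by
  rw [b, Nat.mul_div_cancel_left k two_pos, pow_mul, one_div_mul_eq_div]
  norm_num [oddTerm]

theorem b_two_mul_succ (k : ℕ) :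
    (2 * k + 3) * b (2 * (k + 1)) = 2 * (k + 1) * b (2 * k) + a (2 * (k + 1)) := by
  rw [b_two_mul, b_two_mul, a_two_mul, Nat.centralBinom_eq_two_mul_choose,
    show 2 * (k + 1) + 1 = 2 * k + 3 by ring, show k + 1 + 1 = k + 2 by ring,
    show 2 * (k + 1) = 2 * k + 2 by ring, pow_succ]
  field_simp
  linear_combination sum_oddTerm_succ k

theorem stmt_3 (k : ℕ) :
    ∑ j ∈ Finset.range (k + 1), (a (2 * j)) ^ 2 = (2 * (k : ℚ) + 1) * a (2 * k) * b (2 * k) := by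
  induction k with
  | zero => simp [a, b]
  | succ k ih =>
    rw [sum_range_succ, ih]
    push_cast
    linear_combination -b (2 * k) * a_two_mul_succ k - a (2 * (k + 1)) * b_two_mul_succ k
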